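/- For positive integers k and m, k^m equals the number of pairs (p, w) where p is a permutation of {1,...,m+1} with p(m+1) = 1 and w : {1,...,m+1} → ℕ (including 0) is a function such that des(p) + \sum_{i=1}^{m+1} w(i) = k, where des(p) is the number of descents of p. -/

import Mathlib

open Finset

noncomputable section

/-- The value of the permutation `p` of `Fin m` at position `j` (0-indexed one-line
notation), extended by `0` outside the range. -/
def permVal {m : ℕ} (p : Equiv.Perm (Fin m)) (j : ℕ) : ℕ :=
  if h : j < m then (p ⟨j, h⟩ : ℕ) else 0

/-- The number of descents of the permutation `p` of `Fin m`, in one-line notation. -/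
def desNum {m : ℕ} (p : Equiv.Perm (Fin m)) : ℕ :=
  ((Finset.range (m - 1)).filter fun j => permVal p (j + 1) < permVal p j).card

/-! The stable sorting permutation `p` of `F : Fin (n + 1) → ℕ` is characterised by `F ∘ p` being
weakly increasing and strictly increasing across every descent of `p`. Hence `F ∘ p` is the
sequence of partial sums of `w + [a descent of p ends here]` for a unique `w : Fin (n + 1) → ℕ`,
every pair `(p, w)` arises this way, and the last partial sum is `∑ w + des p`.
Encode `f : Fin m → Fin k` as `F = (k, f 0, …, f (m - 1))`. Its strict maximum `k` sits at `0`, so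
`p` ends with `0`, and these `k ^ m` sequences `F` correspond exactly to the pairs `(p, w)` with
`p (last m) = 0` and `des p + ∑ w = F (p (last m)) = k`. -/

namespace Tuple

variable {n : ℕ} {α : Type*} [LinearOrder α] {f : Fin (n + 1) → α}
  {σ : Equiv.Perm (Fin (n + 1))}

theorem eq_sort_iff_succ : σ = sort f ↔ ∀ i : Fin n, f (σ i.castSucc) ≤ f (σ i.succ) ∧
    (σ i.succ < σ i.castSucc → f (σ i.castSucc) < f (σ i.succ)) := by
  rw [eq_sort_iff', Fin.strictMono_iff_lt_succ]
  refine forall_congr' fun i => ?_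
  have hne : σ i.castSucc ≠ σ i.succ := σ.injective.ne (Fin.castSucc_lt_succ (i := i)).ne
  change toLex (f (σ i.castSucc), σ i.castSucc) < toLex (f (σ i.succ), σ i.succ) ↔ _
  rw [Prod.Lex.toLex_lt_toLex]
  grind

end Tuple

theorem permVal_val {m : ℕ} (p : Equiv.Perm (Fin m)) (i : Fin m) : permVal p i = p i :=
  dif_pos i.is_lt

namespace Equiv.Perm

variable {n : ℕ} (p : Equiv.Perm (Fin (n + 1)))

def descentIndicator : Fin (n + 1) → ℕ :=
  Fin.cons 0 fun j : Fin n => if p j.succ < p j.castSucc then 1 else 0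

theorem sum_descentIndicator : ∑ i, p.descentIndicator i = desNum p := by
  rw [Fin.sum_univ_succ, desNum, card_filter, Nat.add_sub_cancel, ← Fin.sum_univ_eq_sum_range]
  refine (zero_add _).trans (sum_congr rfl fun j _ => ?_)
  rw [descentIndicator, Fin.cons_succ, ← Fin.val_succ, ← Fin.val_castSucc j, permVal_val,
    permVal_val]
  simp only [Fin.lt_def]

def levels (w : Fin (n + 1) → ℕ) (i : Fin (n + 1)) : ℕ :=
  Fin.partialSum (w + p.descentIndicator) i.succ

/-- The sequence that `p` sorts stably into `p.levels w`. -/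
def ofLevels (w : Fin (n + 1) → ℕ) : Fin (n + 1) → ℕ :=
  p.levels w ∘ p.symm

variable {p}

theorem levels_zero (w : Fin (n + 1) → ℕ) : p.levels w 0 = w 0 := by
  rw [levels, Fin.partialSum_succ]
  simp [descentIndicator]

theorem levels_succ (w : Fin (n + 1) → ℕ) (j : Fin n) :
    p.levels w j.succ =
      p.levels w j.castSucc + w j.succ + (if p j.succ < p j.castSucc then 1 else 0) := by
  rw [levels, Fin.partialSum_succ, levels, Fin.succ_castSucc, Pi.add_apply, descentIndicator,
    Fin.cons_succ, add_assoc]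

theorem levels_last (w : Fin (n + 1) → ℕ) :
    p.levels w (Fin.last n) = ∑ i, w i + desNum p := by
  rw [levels, Fin.succ_last, ← sum_descentIndicator, ← sum_add_distrib, Fin.partialSum,
    Fin.val_last, List.take_of_length_le (by simp), List.sum_ofFn]
  rfl

theorem monotone_levels (w : Fin (n + 1) → ℕ) : Monotone (p.levels w) :=
  Fin.monotone_iff_le_succ.2 fun j => by rw [levels_succ]; omega

theorem levels_castSucc_lt_last (hp : p (Fin.last n) = 0) (w : Fin (n + 1) → ℕ) (j : Fin n) :
    p.levels w j.castSucc < p.levels w (Fin.last n) := by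
  obtain ⟨n, rfl⟩ := Nat.exists_eq_succ_of_ne_zero (Fin.pos j).ne'
  have hdes : p (Fin.last n).succ < p (Fin.last n).castSucc := by
    rw [Fin.succ_last, hp, Fin.pos_iff_ne_zero, ← hp]
    exact p.injective.ne (Fin.castSucc_lt_last _).ne
  calc p.levels w j.castSucc ≤ p.levels w (Fin.last n).castSucc :=
        monotone_levels w (Fin.castSucc_le_castSucc_iff.2 (Fin.le_last j))
    _ < p.levels w (Fin.last n).succ := by rw [levels_succ, if_pos hdes]; omega
    _ = p.levels w (Fin.last (n + 1)) := by rw [Fin.succ_last]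

theorem levels_injective : Function.Injective p.levels := by
  intro w w' h
  ext i
  induction i using Fin.cases with
  | zero => simpa only [levels_zero] using congrFun h 0
  | succ j =>
    have := congrFun h j.succ
    rw [levels_succ, levels_succ, congrFun h j.castSucc] at this
    omega

theorem mem_range_levels_iff {a : Fin (n + 1) → ℕ} : a ∈ Set.range p.levels ↔
    ∀ j : Fin n, a j.castSucc + (if p j.succ < p j.castSucc then 1 else 0) ≤ a j.succ := by
  constructor
  · rintro ⟨w, rfl⟩ j
    rw [levels_succ]
    omega
  · intro h
    refine ⟨Fin.cons (a 0) fun j =>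
      a j.succ - (a j.castSucc + if p j.succ < p j.castSucc then 1 else 0), ?_⟩
    ext i
    induction i using Fin.induction with
    | zero => rw [levels_zero, Fin.cons_zero]
    | succ j ih =>
      rw [levels_succ, ih, Fin.cons_succ]
      have := h j
      omega

theorem eq_sort_iff_comp_mem_range_levels {F : Fin (n + 1) → ℕ} :
    p = Tuple.sort F ↔ F ∘ p ∈ Set.range p.levels := by
  rw [Tuple.eq_sort_iff_succ, mem_range_levels_iff]
  refine forall_congr' fun j => ?_
  simp only [Function.comp_apply]
  split_ifs <;> omega

theorem sort_ofLevels (w : Fin (n + 1) → ℕ) : Tuple.sort (p.ofLevels w) = p :=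
  (eq_sort_iff_comp_mem_range_levels.2 ⟨w, by ext; simp [ofLevels]⟩).symm

variable (n) in
theorem ofLevels_injective :
    Function.Injective (Function.uncurry (ofLevels (n := n))) := by
  rintro ⟨p, w⟩ ⟨p', w'⟩ h
  obtain rfl : p = p' := by
    rw [← sort_ofLevels (p := p) w, ← sort_ofLevels (p := p') w']
    exact congrArg Tuple.sort h
  refine Prod.ext rfl (levels_injective (p := p) ?_)
  exact funext fun j => by simpa [ofLevels] using congrFun h (p j)

variable (n) in
theorem image_ofLevels (k : ℕ) :
    Function.uncurry ofLevels '' {pw | pw.1 (Fin.last n) = 0 ∧ desNum pw.1 + ∑ i, pw.2 i = k} =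
      {F : Fin (n + 1) → ℕ | F 0 = k ∧ ∀ i : Fin n, F i.succ < k} := by
  ext F
  constructor
  · rintro ⟨⟨p, w⟩, ⟨hp, hsum⟩, rfl⟩
    have hlast : p.symm 0 = Fin.last n := by rw [Equiv.symm_apply_eq, hp]
    refine ⟨by simp [ofLevels, hlast, levels_last, ← hsum, add_comm], fun i => ?_⟩
    obtain ⟨j, hj⟩ : ∃ j : Fin n, j.castSucc = p.symm i.succ := by
      rw [Fin.exists_castSucc_eq, ← hlast]
      exact p.symm.injective.ne (Fin.succ_ne_zero i)
    simpa [ofLevels, ← hj, levels_last, ← hsum, add_comm] using levels_castSucc_lt_last hp w j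
  · rintro ⟨h0, hlt⟩
    obtain ⟨p, hsort⟩ : ∃ p, p = Tuple.sort F := ⟨_, rfl⟩
    obtain ⟨w, hw⟩ := eq_sort_iff_comp_mem_range_levels.1 hsort
    have hp : p (Fin.last n) = 0 := by
      by_contra hne
      obtain ⟨i, hi⟩ := Fin.exists_succ_eq.2 hne
      have hmax := (hsort ▸ Tuple.monotone_sort F) (Fin.le_last (p.symm 0))
      simp only [Function.comp_apply, Equiv.apply_symm_apply, ← hi] at hmax
      have := hlt i
      omega
    refine ⟨(p, w), ⟨hp, ?_⟩, ?_⟩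
    · rw [add_comm, ← levels_last, hw, Function.comp_apply, hp, h0]
    · ext i
      simp [ofLevels, hw]

end Equiv.Perm

theorem ncard_setOf_apply_zero_eq_and_apply_succ_lt (k m : ℕ) :
    {F : Fin (m + 1) → ℕ | F 0 = k ∧ ∀ i : Fin m, F i.succ < k}.ncard = k ^ m := by
  have hrange : {F : Fin (m + 1) → ℕ | F 0 = k ∧ ∀ i : Fin m, F i.succ < k} =
      Set.range fun f : Fin m → Fin k => Fin.cons k fun i => (f i : ℕ) := by
    ext F
    constructor
    · rintro ⟨rfl, hlt⟩
      exact ⟨fun i => ⟨F i.succ, hlt i⟩, Fin.cons_self_tail F⟩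
    · rintro ⟨f, rfl⟩
      exact ⟨rfl, fun i => by simp⟩
  have hinj : Function.Injective
      fun f : Fin m → Fin k => (Fin.cons k fun i => (f i : ℕ) : Fin (m + 1) → ℕ) :=
    fun f g h => funext fun i => Fin.ext (congrFun (Fin.cons_right_injective _ h) i)
  rw [hrange, Set.ncard_range_of_injective hinj, Nat.card_fun]
  simp

theorem pow_eq_ncard_pairs_general (k m : ℕ) :
    k ^ m = Set.ncard {pw : Equiv.Perm (Fin (m + 1)) × (Fin (m + 1) → ℕ) |
      pw.1 ⟨m, Nat.lt_succ_self m⟩ = ⟨0, Nat.succ_pos m⟩ ∧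
      desNum pw.1 + ∑ i, pw.2 i = k} := by
  rw [← ncard_setOf_apply_zero_eq_and_apply_succ_lt k m, ← Equiv.Perm.image_ofLevels m k,
    Set.ncard_image_of_injective _ (Equiv.Perm.ofLevels_injective m)]
  rfl

/-- `k^m` counts the pairs `(p, w)` where `p` is a permutation of `{1, …, m+1}` with
`p(m+1) = 1` and `w : {1, …, m+1} → ℕ` satisfies `des(p) + ∑ w(i) = k`. -/
theorem pow_eq_ncard_pairs (k m : ℕ) (hk : 0 < k) (hm : 0 < m) :
    k ^ m = Set.ncard {pw : Equiv.Perm (Fin (m + 1)) × (Fin (m + 1) → ℕ) |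
      pw.1 ⟨m, Nat.lt_succ_self m⟩ = ⟨0, Nat.succ_pos m⟩ ∧
      desNum pw.1 + ∑ i, pw.2 i = k} :=
  pow_eq_ncard_pairs_general k m

end
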